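/- arXiv:2505.01444 — 4 statements merged into one kernel-verified Lean document; each statement's English description precedes it below -/
import Mathlib

section
/- Let A be a nondegenerate evolution algebra over a field K with natural basis B = {e_i}_{i∈Λ}, where the multiplication is given by e_i e_i = Σ_j a_{ij} e_j and e_i e_j = 0 for i ≠ j. Then the diagonal structure constants are all nonzero: a_{ii} ≠ 0 for every i ∈ Λ. -/
/-- Left multiplication by a natural-basis vector projects onto the `i`-th
coordinate times `B i * B i`. -/
lemma mulLeft_basis {K A Λ : Type*} [Field K] [NonUnitalNonAssocRing A] [Module K A]
    [SMulCommClass K A A] [IsScalarTower K A A]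
    (B : Module.Basis Λ K A) (hnat : ∀ i j : Λ, i ≠ j → B i * B j = 0) (i : Λ) (a : A) :
    B i * a = B.repr a i • (B i * B i) := by
  have h : (LinearMap.mul K A (B i)) = (B.coord i).smulRight (B i * B i) := by
    apply B.ext
    intro j
    simp only [LinearMap.mul_apply', LinearMap.smulRight_apply, Module.Basis.coord_apply,
      Module.Basis.repr_self]
    by_cases hij : j = i
    · subst hij; simp
    · rw [hnat i j (fun h => hij h.symm)]
      simp [Finsupp.single_apply, hij]
  have := congrFun (congrArg DFunLike.coe h) a
  simpa using this

lemma mulRight_basis {K A Λ : Type*} [Field K] [NonUnitalNonAssocRing A] [Module K A]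
    [SMulCommClass K A A] [IsScalarTower K A A]
    (B : Module.Basis Λ K A) (hnat : ∀ i j : Λ, i ≠ j → B i * B j = 0) (i : Λ) (a : A) :
    a * B i = B.repr a i • (B i * B i) := by
  have h : ((LinearMap.mul K A).flip (B i)) = (B.coord i).smulRight (B i * B i) := by
    apply B.ext
    intro j
    simp only [LinearMap.flip_apply, LinearMap.mul_apply', LinearMap.smulRight_apply,
      Module.Basis.coord_apply, Module.Basis.repr_self]
    by_cases hij : j = i
    · subst hij; simp
    · rw [hnat j i hij]
      simp [Finsupp.single_apply, hij]
  have := congrFun (congrArg DFunLike.coe h) a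
  simpa using this

/-- In a nondegenerate evolution algebra with natural basis `B`, the diagonal
structure constants `a_{ii} = (B.repr (B i * B i)) i` are all nonzero. -/
theorem stmt1 {K A Λ : Type*} [Field K] [NonUnitalNonAssocRing A] [Module K A]
    [SMulCommClass K A A] [IsScalarTower K A A]
    (B : Module.Basis Λ K A) (hnat : ∀ i j : Λ, i ≠ j → B i * B j = 0)
    (hnd : ∀ x : A, (∀ y : A, x * (y * x) = 0) → x = 0) :
    ∀ i : Λ, B.repr (B i * B i) i ≠ 0 := by
  intro i h
  have hsq : B i * (B i * B i) = 0 := by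
    rw [mulLeft_basis B hnat i (B i * B i), h, zero_smul]
  have hzero : B i = 0 := by
    apply hnd
    intro y
    rw [mulRight_basis B hnat i y, mul_smul_comm, hsq, smul_zero]
  exact B.ne_zero i hzero
end

section
/- Let A be a 2-dimensional evolution algebra over a field K with natural basis {e₁, e₂} and multiplication e₁e₁ = a e₁ + b e₂, e₂e₂ = c e₁ + d e₂, with a ≠ 0 and d ≠ 0. Then A is simple if and only if b ≠ 0, c ≠ 0, and ad ≠ bc. -/
/-- Multiplication of the 2-dimensional evolution algebra over `K` with natural
basis `e₁ = (1,0)`, `e₂ = (0,1)` and `e₁e₁ = a e₁ + b e₂`, `e₂e₂ = c e₁ + d e₂`. -/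
def evMulP {K : Type*} [CommRing K] (a b c d : K) (x y : K × K) : K × K :=
  (a * (x.1 * y.1) + c * (x.2 * y.2), b * (x.1 * y.1) + d * (x.2 * y.2))

lemma span_two_top {K : Type*} [Field K] (I : Submodule K (K × K)) (a b c d : K)
    (hdet : a * d - b * c ≠ 0) (h1 : ((a, b) : K × K) ∈ I) (h2 : ((c, d) : K × K) ∈ I) :
    I = ⊤ := by
  ext v
  simp only [Submodule.mem_top, iff_true]
  have hm := I.add_mem
    (I.smul_mem ((v.1 * d - v.2 * c) / (a * d - b * c)) h1)
    (I.smul_mem ((v.2 * a - v.1 * b) / (a * d - b * c)) h2)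
  have hv : v = ((v.1 * d - v.2 * c) / (a * d - b * c)) • ((a, b) : K × K) +
      ((v.2 * a - v.1 * b) / (a * d - b * c)) • ((c, d) : K × K) := by
    refine Prod.ext ?_ ?_ <;>
      simp only [Prod.smul_mk, Prod.mk_add_mk, smul_eq_mul, Prod.fst, Prod.snd] <;>
      rw [div_mul_eq_mul_div, div_mul_eq_mul_div, ← add_div, eq_div_iff hdet] <;> ring
  rw [hv]; exact hm

/-- With `a ≠ 0` and `d ≠ 0`, the algebra is simple iff `b ≠ 0`, `c ≠ 0` and `ad ≠ bc`. -/
theorem stmt4 {K : Type*} [Field K] (a b c d : K) (ha : a ≠ 0) (hd : d ≠ 0) :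
    ((∃ u v : K × K, evMulP a b c d u v ≠ 0) ∧
      ∀ I : Submodule K (K × K),
        (∀ u x : K × K, x ∈ I → evMulP a b c d u x ∈ I ∧ evMulP a b c d x u ∈ I) →
        I = ⊥ ∨ I = ⊤)
    ↔ (b ≠ 0 ∧ c ≠ 0 ∧ a * d ≠ b * c) := by
  constructor
  · rintro ⟨-, h2⟩
    refine ⟨?_, ?_, ?_⟩
    · -- b ≠ 0
      intro hb
      have := h2 (Submodule.span K {((1 : K), (0 : K))}) ?_
      · rcases this with h | h
        · have : ((1 : K), (0 : K)) ∈ (⊥ : Submodule K (K × K)) := by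
            rw [← h]; exact Submodule.mem_span_singleton_self _
          simp [Prod.ext_iff] at this
        · have : ((0 : K), (1 : K)) ∈ Submodule.span K {((1 : K), (0 : K))} := by
            rw [h]; trivial
          rw [Submodule.mem_span_singleton] at this
          obtain ⟨t, ht⟩ := this
          simp [Prod.ext_iff] at ht
      · intro u x hx
        rw [Submodule.mem_span_singleton] at hx
        obtain ⟨t, rfl⟩ := hx
        constructor <;> rw [Submodule.mem_span_singleton] <;>
          exact ⟨a * u.1 * t, by simp [evMulP, hb, Prod.ext_iff]; ring⟩
    · -- c ≠ 0
      intro hc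
      have := h2 (Submodule.span K {((0 : K), (1 : K))}) ?_
      · rcases this with h | h
        · have : ((0 : K), (1 : K)) ∈ (⊥ : Submodule K (K × K)) := by
            rw [← h]; exact Submodule.mem_span_singleton_self _
          simp [Prod.ext_iff] at this
        · have : ((1 : K), (0 : K)) ∈ Submodule.span K {((0 : K), (1 : K))} := by
            rw [h]; trivial
          rw [Submodule.mem_span_singleton] at this
          obtain ⟨t, ht⟩ := this
          simp [Prod.ext_iff] at ht
      · intro u x hx
        rw [Submodule.mem_span_singleton] at hx
        obtain ⟨t, rfl⟩ := hx
        constructor <;> rw [Submodule.mem_span_singleton] <;>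
          exact ⟨d * u.2 * t, by simp [evMulP, hc, Prod.ext_iff]; ring⟩
    · -- a*d ≠ b*c
      intro hdet
      have := h2 (Submodule.span K {((a : K), (b : K))}) ?_
      · rcases this with h | h
        · have : ((a : K), (b : K)) ∈ (⊥ : Submodule K (K × K)) := by
            rw [← h]; exact Submodule.mem_span_singleton_self _
          simp [Prod.ext_iff, ha] at this
        · have : ((0 : K), (1 : K)) ∈ Submodule.span K {((a : K), (b : K))} := by
            rw [h]; trivial
          rw [Submodule.mem_span_singleton] at this
          obtain ⟨t, ht⟩ := this
          simp only [Prod.smul_mk, smul_eq_mul, Prod.ext_iff] at ht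
          obtain ⟨ht1, ht2⟩ := ht
          rcases mul_eq_zero.mp ht1 with rfl | rfl
          · simp at ht2
          · exact ha rfl
      · intro u x hx
        rw [Submodule.mem_span_singleton] at hx
        obtain ⟨t, rfl⟩ := hx
        constructor <;> rw [Submodule.mem_span_singleton] <;>
          refine ⟨u.1 * t * a + u.2 * t * b * c / a, ?_⟩ <;>
          · simp only [evMulP, Prod.smul_mk, smul_eq_mul, Prod.ext_iff]
            constructor
            · field_simp
            · field_simp
              linear_combination (-(u.2 * t * b)) * hdet
  · rintro ⟨hb, hc, hdet⟩
    have hdet' : a * d - b * c ≠ 0 := sub_ne_zero.mpr hdet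
    refine ⟨⟨(1, 0), (1, 0), ?_⟩, ?_⟩
    · simp [evMulP, Prod.ext_iff, ha]
    · intro I hI
      by_cases hbot : I = ⊥
      · exact Or.inl hbot
      · right
        obtain ⟨x, hxI, hx0⟩ := Submodule.exists_mem_ne_zero_of_ne_bot hbot
        -- e₁ * x and e₂ * x
        have h1 := (hI ((1 : K), (0 : K)) x hxI).1
        have h2 := (hI ((0 : K), (1 : K)) x hxI).1
        simp only [evMulP] at h1 h2
        have hab : ((a, b) : K × K) ∈ I ∧ ((c, d) : K × K) ∈ I := by
          by_cases hx1 : x.1 = 0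
          · have hx2 : x.2 ≠ 0 := by
              intro hx2; exact hx0 (Prod.ext hx1 hx2)
            have hcd : ((c, d) : K × K) ∈ I := by
              have := I.smul_mem x.2⁻¹ h2
              convert this using 1
              refine Prod.ext ?_ ?_ <;>
                simp only [Prod.smul_mk, smul_eq_mul, Prod.fst, Prod.snd, hx1] <;>
                field_simp <;> ring
            refine ⟨?_, hcd⟩
            have := (hI ((1 : K), (0 : K)) _ hcd).1
            simp only [evMulP] at this
            have h3 := I.smul_mem c⁻¹ this
            convert h3 using 1
            refine Prod.ext ?_ ?_ <;>
              simp only [Prod.smul_mk, smul_eq_mul, Prod.fst, Prod.snd] <;>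
              field_simp <;> ring
          · have hab' : ((a, b) : K × K) ∈ I := by
              have := I.smul_mem x.1⁻¹ h1
              convert this using 1
              refine Prod.ext ?_ ?_ <;>
                simp only [Prod.smul_mk, smul_eq_mul, Prod.fst, Prod.snd] <;>
                field_simp <;> ring
            refine ⟨hab', ?_⟩
            have := (hI ((0 : K), (1 : K)) _ hab').1
            simp only [evMulP] at this
            have h3 := I.smul_mem b⁻¹ this
            convert h3 using 1
            refine Prod.ext ?_ ?_ <;>
              simp only [Prod.smul_mk, smul_eq_mul, Prod.fst, Prod.snd] <;>
              field_simp <;> ring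
        exact span_two_top I a b c d hdet' hab.1 hab.2
end

section
/- Let A be a 2-dimensional evolution algebra over ℤ₃ with natural basis {e₁, e₂}, multiplication e₁e₁ = a e₁ + b e₂, e₂e₂ = c e₁ + d e₂, and suppose A is simple. Then A is nondegenerate (in the sense x(Ax) = {0} implies x = 0) if and only if a ≠ 0 and d ≠ 0. -/
/-- If `(c,d)` is a multiple of `(a,b)` with `b ≠ 0`, the algebra is not simple. -/
theorem aux5 (a b c d k : ZMod 3) (hc : c = k * a) (hd : d = k * b) (hb : b ≠ 0)
    (hI : ∀ I : Submodule (ZMod 3) (ZMod 3 × ZMod 3),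
        (∀ u x : ZMod 3 × ZMod 3, x ∈ I → evMulP a b c d u x ∈ I ∧ evMulP a b c d x u ∈ I) →
        I = ⊥ ∨ I = ⊤) : False := by
  set I : Submodule (ZMod 3) (ZMod 3 × ZMod 3) :=
    Submodule.span (ZMod 3) {((a, b) : ZMod 3 × ZMod 3)} with hIdef
  have hmem : ∀ u x : ZMod 3 × ZMod 3, evMulP a b c d u x ∈ I := by
    intro u x
    rw [hIdef, Submodule.mem_span_singleton]
    refine ⟨u.1 * x.1 + k * (u.2 * x.2), ?_⟩
    simp only [evMulP, Prod.smul_mk, smul_eq_mul, Prod.mk.injEq, hc, hd]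
    constructor <;> ring
  have hcl : ∀ u x : ZMod 3 × ZMod 3, x ∈ I →
      evMulP a b c d u x ∈ I ∧ evMulP a b c d x u ∈ I :=
    fun u x _ => ⟨hmem u x, hmem x u⟩
  rcases hI I hcl with h | h
  · have : ((a, b) : ZMod 3 × ZMod 3) ∈ I := Submodule.mem_span_singleton_self _
    rw [h, Submodule.mem_bot, Prod.mk.injEq] at this
    exact hb this.2
  · have : ((1, 0) : ZMod 3 × ZMod 3) ∈ I := h ▸ Submodule.mem_top
    rw [hIdef, Submodule.mem_span_singleton] at this
    obtain ⟨m, hm⟩ := this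
    simp only [Prod.smul_mk, smul_eq_mul, Prod.mk.injEq] at hm
    have hm0 : m ≠ 0 := fun h0 => by simp [h0] at hm
    exact hb ((mul_eq_zero.mp hm.2).resolve_left hm0)

/-- If the 2-dimensional evolution algebra over `ℤ₃` is simple, then it is
nondegenerate (`x(Ax) = {0} → x = 0`) iff `a ≠ 0` and `d ≠ 0`. -/
theorem stmt5 (a b c d : ZMod 3)
    (hsimple : (∃ u v : ZMod 3 × ZMod 3, evMulP a b c d u v ≠ 0) ∧
      ∀ I : Submodule (ZMod 3) (ZMod 3 × ZMod 3),
        (∀ u x : ZMod 3 × ZMod 3, x ∈ I → evMulP a b c d u x ∈ I ∧ evMulP a b c d x u ∈ I) →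
        I = ⊥ ∨ I = ⊤) :
    ((∀ x : ZMod 3 × ZMod 3,
        (∀ y : ZMod 3 × ZMod 3, evMulP a b c d x (evMulP a b c d y x) = 0) → x = 0)
      ↔ (a ≠ 0 ∧ d ≠ 0)) := by
  have tri : ∀ z : ZMod 3, z = 0 ∨ z = 1 ∨ z = 2 := by decide
  obtain rfl | rfl | rfl := tri a <;> obtain rfl | rfl | rfl := tri b <;>
    obtain rfl | rfl | rfl := tri c <;> obtain rfl | rfl | rfl := tri d <;>
    first
      | decide
      | exact (aux5 _ _ _ _ 1 (by decide) (by decide) (by decide) hsimple.2).elim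
      | exact (aux5 _ _ _ _ 2 (by decide) (by decide) (by decide) hsimple.2).elim
end

section
/- Let A be an evolution algebra over a field K with a natural basis B = {e_i}_{i∈Λ}, and let e ∈ B be a natural idempotent (e² = e ≠ 0 and e belongs to the natural basis B). Then the ideal generated by e equals K·e (the one-dimensional span of e); in particular e is a minimal idempotent. -/
def IsIdeal (K : Type*) {A : Type*} [Field K] [NonUnitalNonAssocRing A] [Module K A]
    (I : Submodule K A) : Prop :=
  ∀ a x : A, x ∈ I → a * x ∈ I ∧ x * a ∈ I

def IsMinimalIdeal (K : Type*) {A : Type*} [Field K] [NonUnitalNonAssocRing A] [Module K A]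
    (I : Submodule K A) : Prop :=
  IsIdeal K I ∧ I ≠ ⊥ ∧
    ∀ J : Submodule K A, IsIdeal K J → J ≠ ⊥ → J ≤ I → J = I

def idealGen (K : Type*) {A : Type*} [Field K] [NonUnitalNonAssocRing A] [Module K A]
    (a : A) : Submodule K A :=
  sInf {I : Submodule K A | a ∈ I ∧ IsIdeal K I}

/-- A natural idempotent `e = B i₀` of an evolution algebra generates the
one-dimensional ideal `K • e`; in particular it is a minimal idempotent. -/
theorem stmt9 {K A Λ : Type*} [Field K] [NonUnitalNonAssocRing A] [Module K A]
    [SMulCommClass K A A] [IsScalarTower K A A]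
    (B : Module.Basis Λ K A) (hnat : ∀ i j : Λ, i ≠ j → B i * B j = 0)
    (i₀ : Λ) (hidem : B i₀ * B i₀ = B i₀) :
    idealGen K (B i₀) = Submodule.span K {B i₀} ∧
      IsMinimalIdeal K (idealGen K (B i₀)) := by
  set e := B i₀ with he
  -- key: e * x = (B.repr x i₀) • e and x * e = (B.repr x i₀) • e
  have hmul : ∀ x : A, e * x = (B.repr x i₀) • e ∧ x * e = (B.repr x i₀) • e := by
    have h1 : (LinearMap.mul K A e) = (B.coord i₀).smulRight e := by
      apply B.ext
      intro j
      rcases eq_or_ne j i₀ with rfl | hj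
      · simp [← he, hidem, Module.Basis.coord_apply]; simp [he]
      · simp [he, hnat i₀ j (Ne.symm hj), Module.Basis.coord_apply, Module.Basis.repr_self,
          Finsupp.single_apply, hj]
    have h2 : (LinearMap.mul K A).flip e = (B.coord i₀).smulRight e := by
      apply B.ext
      intro j
      rcases eq_or_ne j i₀ with rfl | hj
      · simp [← he, hidem, Module.Basis.coord_apply]; simp [he]
      · simp [he, hnat j i₀ hj, Module.Basis.coord_apply, Module.Basis.repr_self,
          Finsupp.single_apply, hj]
    intro x
    constructor
    · have := congrFun (congrArg DFunLike.coe h1) x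
      simpa [Module.Basis.coord_apply] using this
    · have := congrFun (congrArg DFunLike.coe h2) x
      simpa [Module.Basis.coord_apply] using this
  have hspan_ideal : IsIdeal K (Submodule.span K {e}) := by
    intro a x hx
    rw [Submodule.mem_span_singleton] at hx
    obtain ⟨c, rfl⟩ := hx
    constructor
    · rw [Submodule.mem_span_singleton]
      exact ⟨c * B.repr a i₀, by rw [mul_smul_comm, (hmul a).2, smul_smul, mul_comm]⟩
    · rw [Submodule.mem_span_singleton]
      exact ⟨c * B.repr a i₀, by rw [smul_mul_assoc, (hmul a).1, smul_smul]⟩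
  have hgen : idealGen K e = Submodule.span K {e} := by
    apply le_antisymm
    · exact sInf_le ⟨Submodule.mem_span_singleton_self e, hspan_ideal⟩
    · rw [Submodule.span_le, Set.singleton_subset_iff]
      exact Submodule.mem_sInf.2 fun I hI => hI.1
  have he0 : e ≠ 0 := B.ne_zero i₀
  refine ⟨hgen, ?_⟩
  rw [hgen]
  refine ⟨hspan_ideal, ?_, ?_⟩
  · intro h
    have h2 : e ∈ (⊥ : Submodule K A) := h ▸ Submodule.mem_span_singleton_self e
    exact he0 (Submodule.mem_bot K |>.1 h2)
  · intro J hJ hJ0 hJle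
    obtain ⟨x, hxJ, hx0⟩ := Submodule.exists_mem_ne_zero_of_ne_bot hJ0
    obtain ⟨c, hc⟩ := Submodule.mem_span_singleton.1 (hJle hxJ)
    have hc0 : c ≠ 0 := by rintro rfl; simp [← hc] at hx0
    have heJ : e ∈ J := by
      have := J.smul_mem c⁻¹ hxJ
      rwa [← hc, smul_smul, inv_mul_cancel₀ hc0, one_smul] at this
    refine le_antisymm hJle ?_
    rw [Submodule.span_le, Set.singleton_subset_iff]
    exact heJ
end
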